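/- Let A ⊂ L^∞ be a norm-closed acceptance set that is either a cone or convex with 0 ∈ A, let S be an eligible asset and X a position with X_0 > 0. Then for every α ∈ [R_{A,S}(X), 1], the intermediate position (1−α)X_T + α(X_0/S_0)S_T belongs to A. -/

import Mathlib

open MeasureTheory

/-- The set of percentages making the combined position acceptable. -/
def IRset {Ω : Type*} [MeasurableSpace Ω] {μ : Measure Ω}
    (A : Set (Lp ℝ ⊤ μ)) (S0 X0 : ℝ) (ST XT : Lp ℝ ⊤ μ) : Set ℝ :=
  {l : ℝ | l ∈ Set.Icc (0 : ℝ) 1 ∧ (1 - l) • XT + l • ((X0 / S0) • ST) ∈ A}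

/-- The intrinsic risk measure. -/
noncomputable def IR {Ω : Type*} [MeasurableSpace Ω] {μ : Measure Ω}
    (A : Set (Lp ℝ ⊤ μ)) (S0 X0 : ℝ) (ST XT : Lp ℝ ⊤ μ) : ℝ :=
  sInf (IRset A S0 X0 ST XT)


private lemma lp_smul_nonneg {Ω : Type*} [MeasurableSpace Ω] {μ : Measure Ω}
    {c : ℝ} (hc : 0 ≤ c) {Z : Lp ℝ ⊤ μ} (hZ : 0 ≤ Z) : (0 : Lp ℝ ⊤ μ) ≤ c • Z := by
  rw [← MeasureTheory.Lp.coeFn_nonneg] at hZ ⊢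
  filter_upwards [MeasureTheory.Lp.coeFn_smul c Z, hZ] with ω h1 h2
  rw [h1]
  exact mul_nonneg hc h2

theorem stmt10 {Ω : Type*} [MeasurableSpace Ω] (μ : Measure Ω) [IsProbabilityMeasure μ]
    (A : Set (Lp ℝ ⊤ μ)) (hne : A.Nonempty) (hproper : A ≠ Set.univ)
    (hmono : ∀ X ∈ A, ∀ Y : Lp ℝ ⊤ μ, X ≤ Y → Y ∈ A) (hclosed : IsClosed A)
    (h : (∀ Z ∈ A, ∀ c : ℝ, 0 < c → c • Z ∈ A) ∨ (Convex ℝ A ∧ (0 : Lp ℝ ⊤ μ) ∈ A))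
    (S0 : ℝ) (hS0 : 0 < S0) (ST : Lp ℝ ⊤ μ) (hSA : ST ∈ A) (hST : 0 ≤ ST)
    (X0 : ℝ) (hX0 : 0 < X0) (XT : Lp ℝ ⊤ μ) :
    ∀ α ∈ Set.Icc (IR A S0 X0 ST XT) 1,
      (1 - α) • XT + α • ((X0 / S0) • ST) ∈ A := by
  intro α hα
  set Y : Lp ℝ ⊤ μ := (X0 / S0) • ST with hYdef
  have hr : 0 < X0 / S0 := div_pos hX0 hS0
  have hY0 : (0 : Lp ℝ ⊤ μ) ≤ Y := lp_smul_nonneg hr.le hST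
  -- Y ∈ A in both cases
  have hYA : Y ∈ A := by
    rcases h with hc | ⟨hconv, h0⟩
    · exact hc ST hSA _ hr
    · rcases le_or_gt (X0 / S0) 1 with hle | hgt
      · have := hconv hSA h0 hr.le (by linarith : (0:ℝ) ≤ 1 - X0 / S0) (by ring)
        simpa [hYdef] using this
      · refine hmono ST hSA Y ?_
        have h1 : (0 : Lp ℝ ⊤ μ) ≤ (X0 / S0 - 1) • ST :=
          lp_smul_nonneg (by linarith) hST
        have h2 : Y - ST = (X0 / S0 - 1) • ST := by
          rw [sub_smul, one_smul, hYdef]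
        exact sub_nonneg.mp (h2 ▸ h1)
  have h1mem : (1 : ℝ) ∈ IRset A S0 X0 ST XT := by
    refine ⟨⟨zero_le_one, le_refl 1⟩, ?_⟩
    simpa using hYA
  have hne' : (IRset A S0 X0 ST XT).Nonempty := ⟨1, h1mem⟩
  have hbdd : BddBelow (IRset A S0 X0 ST XT) := ⟨0, fun x hx => hx.1.1⟩
  have hcont : Continuous fun l : ℝ => (1 - l) • XT + l • ((X0 / S0) • ST) :=
    ((continuous_const.sub continuous_id).smul continuous_const).add
      (continuous_id.smul continuous_const)
  have hclset : IsClosed (IRset A S0 X0 ST XT) := by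
    have heq : IRset A S0 X0 ST XT =
        Set.Icc (0:ℝ) 1 ∩ (fun l : ℝ => (1 - l) • XT + l • ((X0 / S0) • ST)) ⁻¹' A := rfl
    rw [heq]
    exact isClosed_Icc.inter (hclosed.preimage hcont)
  have hmem : IR A S0 X0 ST XT ∈ IRset A S0 X0 ST XT := hclset.csInf_mem hne' hbdd
  set l := IR A S0 X0 ST XT with hl
  obtain ⟨⟨hl0, hl1⟩, hlA⟩ := hmem
  obtain ⟨hlα, hα1⟩ := hα
  rcases eq_or_lt_of_le hlα with heq | hlt
  · rw [← heq]; exact hlA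
  · have hl1' : l < 1 := lt_of_lt_of_le hlt hα1
    have hne1 : (1 : ℝ) - l ≠ 0 := by linarith
    have key : (1 - α) • XT + α • Y =
        ((1 - α) / (1 - l)) • ((1 - l) • XT + l • Y) + ((α - l) / (1 - l)) • Y := by
      match_scalars <;> field_simp <;> ring
    rw [key]
    have hd0 : (0:ℝ) ≤ (α - l) / (1 - l) := div_nonneg (by linarith) (by linarith)
    rcases h with hc | ⟨hconv, h0⟩
    · rcases eq_or_lt_of_le hα1 with hα1e | hαlt
      · have : ((1 - α) / (1 - l)) = 0 := by rw [hα1e]; simp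
        rw [this, zero_smul, zero_add]
        have hd1 : ((α - l) / (1 - l)) = 1 := by rw [hα1e]; field_simp
        rw [hd1, one_smul]; exact hYA
      · have hc0 : (0:ℝ) < (1 - α) / (1 - l) := div_pos (by linarith) (by linarith)
        have hP : ((1 - α) / (1 - l)) • ((1 - l) • XT + l • Y) ∈ A := hc _ hlA _ hc0
        refine hmono _ hP _ ?_
        have : (0 : Lp ℝ ⊤ μ) ≤ ((α - l) / (1 - l)) • Y := lp_smul_nonneg hd0 hY0
        exact le_add_of_nonneg_right this
    · have hc0 : (0:ℝ) ≤ (1 - α) / (1 - l) := div_nonneg (by linarith) (by linarith)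
      have hsum : (1 - α) / (1 - l) + (α - l) / (1 - l) = 1 := by field_simp; ring
      exact hconv hlA hYA hc0 hd0 hsum
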